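/- The even moments of the standard semicircle law are the Catalan numbers: for every natural number k, (1/(2π)) ∫_{-2}^{2} t^{2k} √(4 − t²) dt = catalan(k), the k-th Catalan number. -/

import Mathlib

/-!
Substituting `t = -2 cos x` on `[0, π]` turns the moment into `4 ^ (k + 1)` times
`∫₀^π cos x ^ (2k) sin x ^ 2 = ∫₀^π cos x ^ (2k) - cos x ^ (2k + 2)`. The Wallis recursion
`∫₀^π cos ^ (n + 2) = (n + 1) / (n + 2) ∫₀^π cos ^ n` evaluates both terms through central
binomial coefficients, and `(k + 1) catalan k = centralBinom k` finishes.
-/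

open Real intervalIntegral

lemma integral_cos_pow_add_two_zero_pi (n : ℕ) :
    ∫ x in 0..π, cos x ^ (n + 2) = (n + 1) / (n + 2) * ∫ x in 0..π, cos x ^ n := by
  simp [integral_cos_pow]

lemma integral_cos_pow_even_zero_pi (n : ℕ) :
    ∫ x in 0..π, cos x ^ (2 * n) = π * n.centralBinom / 4 ^ n := by
  induction n with
  | zero => simp
  | succ n ih =>
    have hrec : ((n : ℝ) + 1) * (n + 1).centralBinom = 2 * (2 * n + 1) * n.centralBinom := by
      exact_mod_cast Nat.succ_mul_centralBinom_succ n
    rw [mul_add, mul_one, integral_cos_pow_add_two_zero_pi, ih]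
    push_cast
    field_simp
    linear_combination (-2 * 4 ^ n) * hrec

lemma integral_cos_pow_even_mul_sin_sq (n : ℕ) :
    ∫ x in 0..π, cos x ^ (2 * n) * sin x ^ 2 = π * catalan n / (2 * 4 ^ n) := by
  have hcat : ((n : ℝ) + 1) * catalan n = n.centralBinom := by
    exact_mod_cast succ_mul_catalan_eq_centralBinom n
  have hsplit : ∀ x, cos x ^ (2 * n) * sin x ^ 2 = cos x ^ (2 * n) - cos x ^ (2 * n + 2) := by
    intro x
    rw [sin_sq]
    ring
  simp_rw [hsplit]
  rw [integral_sub (by apply Continuous.intervalIntegrable; fun_prop)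
    (by apply Continuous.intervalIntegrable; fun_prop), integral_cos_pow_add_two_zero_pi,
    integral_cos_pow_even_zero_pi, ← hcat]
  push_cast
  field_simp
  ring

lemma integral_mul_sqrt_sq_sub_sq {f : ℝ → ℝ} (hf : Continuous f) {r : ℝ} (hr : 0 ≤ r) :
    ∫ t in -r..r, f t * √(r ^ 2 - t ^ 2) = r ^ 2 * ∫ x in 0..π, f (-(r * cos x)) * sin x ^ 2 := by
  have hsub := integral_comp_mul_deriv (a := 0) (b := π) (f := fun x => -(r * cos x))
    (g := fun t => f t * √(r ^ 2 - t ^ 2))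
    (fun x _ => ((hasDerivAt_cos x).const_mul r).neg) (by fun_prop) (by fun_prop)
  simp only [Function.comp, cos_zero, cos_pi, mul_one, mul_neg, neg_neg] at hsub
  rw [← hsub, ← integral_const_mul]
  refine integral_congr fun x hx => ?_
  have hsin : 0 ≤ sin x := sin_nonneg_of_mem_Icc (by simpa [Set.uIcc_of_le pi_pos.le] using hx)
  have hroot : √(r ^ 2 - (-(r * cos x)) ^ 2) = r * sin x := by
    rw [← sqrt_sq (mul_nonneg hr hsin)]
    congr 1
    linear_combination (-r ^ 2) * sin_sq_add_cos_sq x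
  simp only [hroot]
  ring

lemma integral_pow_even_mul_sqrt_sq_sub_sq (n : ℕ) {r : ℝ} (hr : 0 ≤ r) :
    ∫ t in -r..r, t ^ (2 * n) * √(r ^ 2 - t ^ 2) =
      π * r ^ (2 * n + 2) * catalan n / (2 * 4 ^ n) := by
  rw [integral_mul_sqrt_sq_sub_sq (by fun_prop) hr]
  simp_rw [neg_mul_eq_neg_mul, mul_pow, (even_two_mul n).neg_pow, mul_assoc]
  rw [integral_const_mul, integral_cos_pow_even_mul_sin_sq]
  ring

theorem semicircle_even_moments_catalan (k : ℕ) :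
    (1 / (2 * Real.pi)) *
      ∫ t in (-2 : ℝ)..(2 : ℝ), t ^ (2 * k) * Real.sqrt (4 - t ^ 2) = (catalan k : ℝ) := by
  have hmoment := integral_pow_even_mul_sqrt_sq_sub_sq k (r := 2) zero_le_two
  have h4 : (2 : ℝ) ^ (2 * k + 2) = 4 * 4 ^ k := by
    rw [pow_add, pow_mul]
    ring
  norm_num at hmoment
  rw [hmoment, h4]
  field_simp
  norm_num
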